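/- Let k ≥ 0 and let y be an integer with 2^k ≤ y < 2^{k+1} that is not a Zumkeller number. Then Ulam[y] is biperiodic with biperiod 2^{k+1}×2^{k+1}. -/

import Mathlib

/-- Fuel-indexed Ulam predicate: a binary word (as a `List Bool`) of length 1 is Ulam,
and a longer word is Ulam iff it is expressible *uniquely* as a concatenation of two
distinct (nonempty) Ulam words. The fuel strictly exceeds the lengths needed. -/
def ulamAux : ℕ → List Bool → Prop
  | 0, _ => False
  | n + 1, w =>
    if w.length = 1 then True
    else ∃! p : List Bool × List Bool,
      p.1 ≠ [] ∧ p.2 ≠ [] ∧ p.1 ≠ p.2 ∧ w = p.1 ++ p.2 ∧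
        ulamAux n p.1 ∧ ulamAux n p.2

/-- A binary word is an Ulam word. -/
def IsUlam (w : List Bool) : Prop := ulamAux w.length w

/-- The word `0^x 1 0^y`. -/
def wordTwo (x y : ℕ) : List Bool :=
  List.replicate x false ++ [true] ++ List.replicate y false

/-- The word `0^x 1 0^y 1 0^z`. -/
def wordThree (x y z : ℕ) : List Bool :=
  List.replicate x false ++ [true] ++ List.replicate y false ++ [true] ++
    List.replicate z false

/-- `UlamSet y` is the set of pairs `(x,z)` such that `0^x 1 0^y 1 0^z` is Ulam. -/
def UlamSet (y : ℕ) : Set (ℕ × ℕ) := {p | IsUlam (wordThree p.1 y p.2)}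

/-- `culam y x z = min(2, N)` where `N` counts `0 ≤ a ≤ y` with both
`w(x,a)` and `w(y-a,z)` Ulam. -/
noncomputable def culam (y x z : ℕ) : ℕ :=
  min 2 {a : ℕ | a ≤ y ∧ IsUlam (wordTwo x a) ∧ IsUlam (wordTwo (y - a) z)}.ncard

/-- A positive integer is Zumkeller if its binary representation has at most one `0`. -/
def IsZumkeller (y : ℕ) : Prop := 0 < y ∧ (Nat.bits y).count false ≤ 1

/-- The largest `e ≤ d - 1` with `x mod 2^(e+1) < 2^e` and `z mod 2^(e+1) < 2^e`
(and `0` if none exists). -/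
def eIdx (d x z : ℕ) : ℕ :=
  Nat.findGreatest (fun e => x % 2 ^ (e + 1) < 2 ^ e ∧ z % 2 ^ (e + 1) < 2 ^ e) (d - 1)

/-- The universal pattern `E1[d]` on `B_d`. -/
def E1 (d x z : ℕ) : ℕ :=
  if 2 ^ d - 1 ≤ x + z then 0
  else if x % 2 ^ eIdx d x z + z % 2 ^ eIdx d x z < 2 ^ eIdx d x z - 1 then 2 else 1

/-- The universal pattern `E2[d]` on `B_d` (constant `1`). -/
def E2 (_d _x _z : ℕ) : ℕ := 1

/-- The universal pattern `O1[d]` on `B_d`. -/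
def O1 (d x z : ℕ) : ℕ :=
  if 2 ^ d - 2 ≤ x + z then 0
  else if (x + z) % 2 = 0 then (if x % 2 = 1 then 0 else 2)
  else if x % 2 ^ eIdx d x z + z % 2 ^ eIdx d x z < 2 ^ eIdx d x z - 1 then 2 else 1

/-- The universal pattern `O2[d]` on `B_d` (independent of `d`). -/
def O2 (_d x z : ℕ) : ℕ :=
  if (x + z) % 2 = 0 then (if x % 2 = 1 then 0 else 2) else 1
lemma ulamAux_succ (n : ℕ) (w : List Bool) : ulamAux (n+1) w =
    if w.length = 1 then True
    else ∃! p : List Bool × List Bool,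
      p.1 ≠ [] ∧ p.2 ≠ [] ∧ p.1 ≠ p.2 ∧ w = p.1 ++ p.2 ∧
        ulamAux n p.1 ∧ ulamAux n p.2 := by
  rfl

lemma ulamAux_congr : ∀ m, ∀ w : List Bool, 1 ≤ w.length → w.length ≤ m →
    (ulamAux m w ↔ IsUlam w) := by
  intro m
  induction m using Nat.strong_induction_on with
  | _ m IH =>
    intro w h1 h2
    match m, h2 with
    | 0, h2 => omega
    | m+1, h2 =>
      rcases Nat.lt_or_ge 1 w.length with h | h
      case inr =>
        -- length = 1
        have hl : w.length = 1 := by omega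
        rw [ulamAux_succ, if_pos hl, IsUlam, hl, ulamAux_succ, if_pos hl]
      case inl =>
        obtain ⟨l, hl⟩ : ∃ l, w.length = l + 2 := ⟨w.length - 2, by omega⟩
        have hne : ¬ (w.length = 1) := by omega
        rw [ulamAux_succ, if_neg hne, IsUlam, hl, ulamAux_succ, if_neg hne]
        apply existsUnique_congr
        rintro ⟨u, v⟩
        simp only
        have key : ∀ pu : Prop, ∀ pv : Prop,
            (u ≠ [] ∧ v ≠ [] ∧ u ≠ v ∧ w = u ++ v ∧ pu ∧ pv) →
            (u.length + v.length = w.length ∧ 1 ≤ u.length ∧ 1 ≤ v.length) := by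
          rintro pu pv ⟨hu, hv, _, hw, _, _⟩
          have : u.length + v.length = w.length := by rw [hw]; simp
          exact ⟨this, List.length_pos_iff.mpr hu, List.length_pos_iff.mpr hv⟩
        constructor
        · rintro h'
          obtain ⟨hlen, hu1, hv1⟩ := key _ _ h'
          obtain ⟨hu, hv, huv, hw, pu, pv⟩ := h'
          exact ⟨hu, hv, huv, hw,
            (IH (l+1) (by omega) u hu1 (by omega)).mpr ((IH m (by omega) u hu1 (by omega)).mp pu),
            (IH (l+1) (by omega) v hv1 (by omega)).mpr ((IH m (by omega) v hv1 (by omega)).mp pv)⟩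
        · rintro h'
          obtain ⟨hlen, hu1, hv1⟩ := key _ _ h'
          obtain ⟨hu, hv, huv, hw, pu, pv⟩ := h'
          exact ⟨hu, hv, huv, hw,
            (IH m (by omega) u hu1 (by omega)).mpr ((IH (l+1) (by omega) u hu1 (by omega)).mp pu),
            (IH m (by omega) v hv1 (by omega)).mpr ((IH (l+1) (by omega) v hv1 (by omega)).mp pv)⟩

lemma isUlam_iff_exu {w : List Bool} (h : 2 ≤ w.length) :
    IsUlam w ↔ ∃! p : List Bool × List Bool,
      p.1 ≠ [] ∧ p.2 ≠ [] ∧ p.1 ≠ p.2 ∧ w = p.1 ++ p.2 ∧ IsUlam p.1 ∧ IsUlam p.2 := by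
  obtain ⟨l, hl⟩ : ∃ l, w.length = l + 2 := ⟨w.length - 2, by omega⟩
  have hne : ¬ (w.length = 1) := by omega
  rw [IsUlam, hl, ulamAux_succ, if_neg hne]
  apply existsUnique_congr
  rintro ⟨u, v⟩
  simp only
  constructor
  · rintro ⟨hu, hv, huv, hw, pu, pv⟩
    have hlen : u.length + v.length = w.length := by rw [hw]; simp
    have hu1 : 1 ≤ u.length := List.length_pos_iff.mpr hu
    have hv1 : 1 ≤ v.length := List.length_pos_iff.mpr hv
    exact ⟨hu, hv, huv, hw, (ulamAux_congr _ _ hu1 (by omega)).mp pu,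
      (ulamAux_congr _ _ hv1 (by omega)).mp pv⟩
  · rintro ⟨hu, hv, huv, hw, pu, pv⟩
    have hlen : u.length + v.length = w.length := by rw [hw]; simp
    have hu1 : 1 ≤ u.length := List.length_pos_iff.mpr hu
    have hv1 : 1 ≤ v.length := List.length_pos_iff.mpr hv
    exact ⟨hu, hv, huv, hw, (ulamAux_congr _ _ hu1 (by omega)).mpr pu,
      (ulamAux_congr _ _ hv1 (by omega)).mpr pv⟩

lemma isUlam_len1 {w : List Bool} (h : w.length = 1) : IsUlam w := by
  rw [IsUlam, h, ulamAux_succ, if_pos h]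
  trivial

def RF (n : ℕ) : List Bool := List.replicate n false

lemma RF_add (m n : ℕ) : RF (m+n) = RF m ++ RF n := by
  rw [RF, RF, RF, List.replicate_add]

lemma eq_RF_of_append {u w : List Bool} {n : ℕ} (h : u ++ w = RF n) :
    u = RF u.length ∧ w = RF w.length ∧ u.length + w.length = n := by
  have hlen : u.length + w.length = n := by
    have := congrArg List.length h
    simpa [RF] using this
  have hu : u = RF u.length := by
    apply List.eq_replicate_length.mpr
    intro b hb
    have : b ∈ RF n := h ▸ (List.mem_append.mpr (Or.inl hb))
    exact (List.eq_of_mem_replicate (by simpa [RF] using this))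
  have hw : w = RF w.length := by
    apply List.eq_replicate_length.mpr
    intro b hb
    have : b ∈ RF n := h ▸ (List.mem_append.mpr (Or.inr hb))
    exact (List.eq_of_mem_replicate (by simpa [RF] using this))
  exact ⟨hu, hw, hlen⟩

/-- splits of `RF n ++ true :: t` -/
lemma split_RF_true {u v t : List Bool} {n : ℕ} (h : u ++ v = RF n ++ true :: t) :
    (∃ i, i ≤ n ∧ u = RF i ∧ v = RF (n-i) ++ true :: t) ∨
    (∃ s1 s2 : List Bool, s1 ++ s2 = t ∧ u = RF n ++ true :: s1 ∧ v = s2) := by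
  rcases List.append_eq_append_iff.mp h with ⟨a', ha1, ha2⟩ | ⟨c', hc1, hc2⟩
  · -- RF n = u ++ a', v = a' ++ true :: t
    obtain ⟨hu, ha, hlen⟩ := eq_RF_of_append ha1.symm
    exact Or.inl ⟨u.length, by omega, hu, by
      rw [ha2, ha, (by omega : n - u.length = a'.length)]⟩
  · -- u = RF n ++ c', true :: t = c' ++ v
    match c', hc2 with
    | [], hc2 => exact Or.inl ⟨n, le_refl n, by simpa using hc1, by simpa [RF] using hc2.symm⟩
    | (b :: s1), hc2 =>
      have hb : b = true := by
        have := congrArg (fun l => l.head?) hc2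
        simpa using this.symm
      subst hb
      have ht : t = s1 ++ v := by
        have := congrArg List.tail hc2
        simpa using this
      exact Or.inr ⟨s1, v, ht.symm, by simpa using hc1, rfl⟩

lemma true_not_mem_RF {n : ℕ} : true ∉ RF n := by
  intro h
  simpa [RF] using (List.eq_of_mem_replicate h)

lemma isUlam_RF : ∀ n, IsUlam (RF n) ↔ n = 1 := by
  intro n
  induction n using Nat.strong_induction_on with
  | _ n IH =>
    match n with
    | 0 => simp only [RF, List.replicate]; constructor
           · intro h; exact absurd h (by rw [IsUlam]; simp [ulamAux])
           · omega
    | 1 => simp only [eq_self_iff_true, iff_true]; exact isUlam_len1 (by simp [RF])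
    | (n+2) =>
      constructor
      · intro h
        rw [isUlam_iff_exu (by simp only [RF, List.length_replicate]; omega)] at h
        obtain ⟨⟨u,v⟩, ⟨hu, hv, huv, hw, pu, pv⟩, -⟩ := h
        simp only at hu hv huv hw pu pv
        obtain ⟨hu', hv', hlen⟩ := eq_RF_of_append hw.symm
        have l1 : 1 ≤ u.length := List.length_pos_iff.mpr hu
        have l2 : 1 ≤ v.length := List.length_pos_iff.mpr hv
        rw [hu'] at pu
        rw [hv'] at pv
        have h1 : u.length = 1 := (IH u.length (by omega)).mp pu
        have h2 : v.length = 1 := (IH v.length (by omega)).mp pv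
        rw [hu', hv', h1, h2] at huv
        exact absurd rfl huv
      · omega

lemma isUlam_false : IsUlam [false] := isUlam_len1 (by simp)

def W2 (x y : ℕ) : List Bool := RF x ++ true :: RF y

lemma W2_len (x y : ℕ) : (W2 x y).length = x + y + 1 := by simp [W2, RF]; omega

lemma true_mem_W2 (x y : ℕ) : true ∈ W2 x y := by simp [W2]

lemma W2_ne_RF (x y n : ℕ) : W2 x y ≠ RF n := by
  intro h
  exact true_not_mem_RF (h ▸ true_mem_W2 x y)

lemma RF_true_inj : ∀ x x' : ℕ, ∀ s s' : List Bool,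
    RF x ++ true :: s = RF x' ++ true :: s' → x = x' ∧ s = s' := by
  intro x
  induction x with
  | zero =>
    intro x' s s' h
    match x' with
    | 0 => simpa [RF] using h
    | x'+1 =>
      exfalso
      rw [show RF (x'+1) = false :: RF x' by simp [RF, List.replicate_succ]] at h
      simpa [RF] using congrArg List.head? h
  | succ x IH =>
    intro x' s s' h
    match x' with
    | 0 =>
      exfalso
      rw [show RF (x+1) = false :: RF x by simp [RF, List.replicate_succ]] at h
      simpa [RF] using congrArg List.head? h
    | x'+1 =>
      rw [show RF (x+1) = false :: RF x by simp [RF, List.replicate_succ],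
        show RF (x'+1) = false :: RF x' by simp [RF, List.replicate_succ]] at h
      have := IH x' s s' (by simpa using congrArg List.tail h)
      exact ⟨by omega, this.2⟩

lemma W2_inj {x y x' y' : ℕ} (h : W2 x y = W2 x' y') : x = x' ∧ y = y' := by
  obtain ⟨h1, h2⟩ := RF_true_inj x x' (RF y) (RF y') h
  have := congrArg List.length h2
  simp [RF] at this
  exact ⟨h1, this⟩

/-- classification of decompositions of W2 into Ulam pairs -/
lemma W2_split {x y : ℕ} {u v : List Bool} (hw : u ++ v = W2 x y)
    (hu : u ≠ []) (hv : v ≠ []) (pu : IsUlam u) (pv : IsUlam v) :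
    (1 ≤ x ∧ u = [false] ∧ v = W2 (x-1) y) ∨
    (1 ≤ y ∧ u = W2 x (y-1) ∧ v = [false]) := by
  rcases split_RF_true hw with ⟨i, hi, hu', hv'⟩ | ⟨s1, s2, hs, hu', hv'⟩
  · left
    rw [hu'] at pu
    have h1 : i = 1 := (isUlam_RF i).mp pu
    subst h1
    have hx : 1 ≤ x := by
      rcases Nat.eq_zero_or_pos x with h | h
      · subst h; simp at hi
      · exact h
    refine ⟨hx, by simpa [RF] using hu', by rw [hv']; rfl⟩
  · right
    obtain ⟨hs1, hs2, hlen⟩ := eq_RF_of_append hs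
    rw [hv', hs2] at pv
    have h1 : s2.length = 1 := (isUlam_RF _).mp pv
    have hy : 1 ≤ y := by
      have : y = s1.length + s2.length := by
        have := congrArg List.length hs; simpa [RF] using this.symm
      omega
    refine ⟨hy, ?_, by rw [hv', hs2, h1]; rfl⟩
    rw [hu', hs1]
    have : s1.length = y - 1 := by
      have := congrArg List.length hs; simp [RF] at this; omega
    rw [this]; rfl

/-- arithmetic: land with doubling -/
lemma land_two_mul (a b : ℕ) : (2*a) &&& (2*b) = 2*(a&&&b) := by
  have := Nat.land_bit false a false b
  simpa [Nat.bit_val] using this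
lemma land_two_mul_add_one_left (a b : ℕ) : (2*a+1) &&& (2*b) = 2*(a&&&b) := by
  have := Nat.land_bit true a false b
  simpa [Nat.bit_val] using this
lemma land_two_mul_add_one_right (a b : ℕ) : (2*a) &&& (2*b+1) = 2*(a&&&b) := by
  have := Nat.land_bit false a true b
  simpa [Nat.bit_val] using this
lemma land_two_mul_add_one (a b : ℕ) : (2*a+1) &&& (2*b+1) = 2*(a&&&b)+1 := by
  have := Nat.land_bit true a true b
  simpa [Nat.bit_val] using this

lemma land_rec_identity : ∀ n, ∀ x y : ℕ, x + y = n → 1 ≤ x + y →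
    (x &&& y = 0 ↔
      ((1 ≤ x ∧ (x-1) &&& y = 0) ∧ ¬(1 ≤ y ∧ x &&& (y-1) = 0)) ∨
      ((1 ≤ y ∧ x &&& (y-1) = 0) ∧ ¬(1 ≤ x ∧ (x-1) &&& y = 0))) := by
  intro n
  induction n using Nat.strong_induction_on with
  | _ n IH =>
    intro x y hn h1
    obtain ⟨a, ha⟩ : ∃ a, x = 2*a ∨ x = 2*a+1 := ⟨x/2, by omega⟩
    obtain ⟨b, hb⟩ : ∃ b, y = 2*b ∨ y = 2*b+1 := ⟨y/2, by omega⟩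
    rcases ha with ha | ha <;> rcases hb with hb | hb <;> subst ha hb
    · -- x=2a, y=2b
      have e0 : (2*a) &&& (2*b) = 2*(a&&&b) := land_two_mul a b
      have eA : 1 ≤ 2*a → (2*a-1) &&& (2*b) = 2*((a-1)&&&b) := by
        intro h
        have : 2*a-1 = 2*(a-1)+1 := by omega
        rw [this]; exact land_two_mul_add_one_left _ _
      have eB : 1 ≤ 2*b → (2*a) &&& (2*b-1) = 2*(a&&&(b-1)) := by
        intro h
        have : 2*b-1 = 2*(b-1)+1 := by omega
        rw [this]; exact land_two_mul_add_one_right _ _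
      have IH' := IH (a+b) (by omega) a b rfl (by omega)
      constructor
      · intro h0
        have : a &&& b = 0 := by omega
        rcases IH'.mp this with ⟨⟨hA1, hA2⟩, hB⟩ | ⟨⟨hB1, hB2⟩, hA⟩
        · left
          refine ⟨⟨by omega, by rw [eA (by omega)]; omega⟩, ?_⟩
          rintro ⟨hb1, hb2⟩
          rw [eB hb1] at hb2
          exact hB ⟨by omega, by omega⟩
        · right
          refine ⟨⟨by omega, by rw [eB (by omega)]; omega⟩, ?_⟩
          rintro ⟨ha1, ha2⟩
          rw [eA ha1] at ha2
          exact hA ⟨by omega, by omega⟩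
      · intro h0
        rw [e0]
        have : a &&& b = 0 := by
          apply IH'.mpr
          rcases h0 with ⟨⟨hA1, hA2⟩, hB⟩ | ⟨⟨hB1, hB2⟩, hA⟩
          · rw [eA hA1] at hA2
            left
            refine ⟨⟨by omega, by omega⟩, ?_⟩
            rintro ⟨h3, h4⟩
            exact hB ⟨by omega, by rw [eB (by omega)]; omega⟩
          · rw [eB hB1] at hB2
            right
            refine ⟨⟨by omega, by omega⟩, ?_⟩
            rintro ⟨h3, h4⟩
            exact hA ⟨by omega, by rw [eA (by omega)]; omega⟩
        omega
    · -- x=2a even, y=2b+1 odd : symmetric to case below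
      have e0 : (2*a) &&& (2*b+1) = 2*(a&&&b) := land_two_mul_add_one_right a b
      have eB : (2*a) &&& (2*b+1-1) = 2*(a&&&b) := by
        simpa using land_two_mul a b
      have eA : 1 ≤ 2*a → (2*a-1) &&& (2*b+1) = 2*((a-1)&&&b)+1 := by
        intro h
        have : 2*a-1 = 2*(a-1)+1 := by omega
        rw [this]; exact land_two_mul_add_one _ _
      constructor
      · intro h0
        right
        refine ⟨⟨by omega, by rw [eB]; omega⟩, ?_⟩
        rintro ⟨h3, h4⟩
        rw [eA h3] at h4
        omega
      · rintro (⟨⟨h3, h4⟩, -⟩ | ⟨⟨h3, h4⟩, -⟩)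
        · rw [eA h3] at h4; omega
        · rw [eB] at h4; rw [e0]; omega
    · -- x odd, y even
      have e0 : (2*a+1) &&& (2*b) = 2*(a&&&b) := land_two_mul_add_one_left a b
      have eA : (2*a+1-1) &&& (2*b) = 2*(a&&&b) := by
        simpa using land_two_mul a b
      have eB : 1 ≤ 2*b → (2*a+1) &&& (2*b-1) = 2*(a&&&(b-1))+1 := by
        intro h
        have : 2*b-1 = 2*(b-1)+1 := by omega
        rw [this]; exact land_two_mul_add_one _ _
      constructor
      · intro h0
        left
        refine ⟨⟨by omega, by rw [eA]; omega⟩, ?_⟩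
        rintro ⟨h3, h4⟩
        rw [eB h3] at h4
        omega
      · rintro (⟨⟨h3, h4⟩, -⟩ | ⟨⟨h3, h4⟩, -⟩)
        · rw [eA] at h4; rw [e0]; omega
        · rw [eB h3] at h4; omega
    · -- both odd
      have e0 : (2*a+1) &&& (2*b+1) = 2*(a&&&b)+1 := land_two_mul_add_one a b
      have eA : (2*a+1-1) &&& (2*b+1) = 2*(a&&&b) := by
        simpa using land_two_mul_add_one_right a b
      have eB : (2*a+1) &&& (2*b+1-1) = 2*(a&&&b) := by
        simpa using land_two_mul_add_one_left a b
      constructor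
      · intro h0; omega
      · rintro (⟨⟨h3, h4⟩, hB⟩ | ⟨⟨h3, h4⟩, hA⟩)
        · rw [eA] at h4
          exact absurd ⟨by omega, by rw [eB]; omega⟩ hB
        · rw [eB] at h4
          exact absurd ⟨by omega, by rw [eA]; omega⟩ hA

lemma isUlam_W2 : ∀ n, ∀ x y : ℕ, x + y = n → (IsUlam (W2 x y) ↔ x &&& y = 0) := by
  intro n
  induction n using Nat.strong_induction_on with
  | _ n IH =>
    intro x y hn
    rcases Nat.eq_zero_or_pos n with h0 | h0
    · subst h0
      have hx : x = 0 := by omega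
      have hy : y = 0 := by omega
      subst hx hy
      constructor
      · intro _; rfl
      · intro _; exact isUlam_len1 (by simp [W2, RF])
    · have hlen : 2 ≤ (W2 x y).length := by rw [W2_len]; omega
      rw [isUlam_iff_exu hlen]
      rw [land_rec_identity n x y hn (by omega)]
      constructor
      · rintro ⟨⟨u,v⟩, ⟨hu, hv, huv, hw, pu, pv⟩, huniq⟩
        simp only at hu hv huv hw pu pv
        rcases W2_split hw.symm hu hv pu pv with ⟨hx1, hu', hv'⟩ | ⟨hy1, hu', hv'⟩
        · left
          rw [hv'] at pv
          have := (IH (n-1) (by omega) (x-1) y (by omega)).mp pv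
          refine ⟨⟨hx1, this⟩, ?_⟩
          rintro ⟨hy1, hB⟩
          have pB : IsUlam (W2 x (y-1)) := (IH (n-1) (by omega) x (y-1) (by omega)).mpr hB
          have := huniq (W2 x (y-1), [false]) ⟨by apply W2_ne_RF x (y-1) 0,
            by simp, ?_, ?_, pB, isUlam_false⟩
          · rw [Prod.ext_iff] at this
            simp only at this
            exact (W2_ne_RF x (y-1) 1) (by rw [this.1, hu']; simp [RF])
          · intro hcon
            exact (W2_ne_RF x (y-1) 1) (by simpa [RF] using hcon)
          · show W2 x y = W2 x (y-1) ++ [false]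
            have : W2 x (y-1) ++ [false] = RF x ++ true :: (RF (y-1) ++ [false]) := by
              simp [W2]
            rw [this, show (RF (y-1) ++ [false] : List Bool) = RF y by
              rw [show (([false]:List Bool) = RF 1) by simp [RF], ← RF_add]
              congr 1; omega]
            rfl
        · right
          rw [hu'] at pu
          have := (IH (n-1) (by omega) x (y-1) (by omega)).mp pu
          refine ⟨⟨hy1, this⟩, ?_⟩
          rintro ⟨hx1, hA⟩
          have pA : IsUlam (W2 (x-1) y) := (IH (n-1) (by omega) (x-1) y (by omega)).mpr hA
          have := huniq ([false], W2 (x-1) y) ⟨by simp, by apply W2_ne_RF (x-1) y 0,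
            by intro hcon; exact (W2_ne_RF (x-1) y 1) (by simpa [RF] using hcon.symm), ?_,
            isUlam_false, pA⟩
          · rw [Prod.ext_iff] at this
            simp only at this
            exact (W2_ne_RF x (y-1) 1) (by rw [← hu', ← this.1]; simp [RF])
          · show W2 x y = [false] ++ W2 (x-1) y
            have : ([false] ++ W2 (x-1) y : List Bool) = (RF 1 ++ RF (x-1)) ++ true :: RF y := by
              simp [W2, RF]
            rw [this, ← RF_add, show 1 + (x-1) = x by omega]
            rfl
      · intro h
        rcases h with ⟨⟨hx1, hA⟩, hB⟩ | ⟨⟨hy1, hB⟩, hA⟩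
        · have pA : IsUlam (W2 (x-1) y) := (IH (n-1) (by omega) (x-1) y (by omega)).mpr hA
          refine ⟨([false], W2 (x-1) y), ⟨by simp, by apply W2_ne_RF (x-1) y 0,
            by intro hcon; exact (W2_ne_RF (x-1) y 1) (by simpa [RF] using hcon.symm), ?_,
            isUlam_false, pA⟩, ?_⟩
          · show W2 x y = [false] ++ W2 (x-1) y
            have : ([false] ++ W2 (x-1) y : List Bool) = (RF 1 ++ RF (x-1)) ++ true :: RF y := by
              simp [W2, RF]
            rw [this, ← RF_add, show 1 + (x-1) = x by omega]
            rfl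
          · rintro ⟨u, v⟩ ⟨hu, hv, huv, hw, pu, pv⟩
            rcases W2_split hw.symm hu hv pu pv with ⟨hx1', hu', hv'⟩ | ⟨hy1', hu', hv'⟩
            · rw [Prod.ext_iff]; exact ⟨by simpa using hu', by simpa using hv'⟩
            · exfalso
              rw [hu'] at pu
              exact hB ⟨hy1', (IH (n-1) (by omega) x (y-1) (by omega)).mp pu⟩
        · have pB : IsUlam (W2 x (y-1)) := (IH (n-1) (by omega) x (y-1) (by omega)).mpr hB
          refine ⟨(W2 x (y-1), [false]), ⟨by apply W2_ne_RF x (y-1) 0, by simp,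
            by intro hcon; exact (W2_ne_RF x (y-1) 1) (by simpa [RF] using hcon), ?_,
            pB, isUlam_false⟩, ?_⟩
          · show W2 x y = W2 x (y-1) ++ [false]
            have : W2 x (y-1) ++ [false] = RF x ++ true :: (RF (y-1) ++ [false]) := by
              simp [W2]
            rw [this, show (RF (y-1) ++ [false] : List Bool) = RF y by
              rw [show (([false]:List Bool) = RF 1) by simp [RF], ← RF_add]
              congr 1; omega]
            rfl
          · rintro ⟨u, v⟩ ⟨hu, hv, huv, hw, pu, pv⟩
            rcases W2_split hw.symm hu hv pu pv with ⟨hx1', hu', hv'⟩ | ⟨hy1', hu', hv'⟩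
            · exfalso
              rw [hv'] at pv
              exact hA ⟨hx1', (IH (n-1) (by omega) (x-1) y (by omega)).mp pv⟩
            · rw [Prod.ext_iff]; exact ⟨by simpa using hu', by simpa using hv'⟩


def W3 (x y z : ℕ) : List Bool := RF x ++ true :: (RF y ++ true :: RF z)

lemma W3_len (x y z : ℕ) : (W3 x y z).length = x + y + z + 2 := by
  simp [W3, RF]; omega

lemma true_mem_W3 (x y z : ℕ) : true ∈ W3 x y z := by simp [W3]

lemma W3_ne_RF (x y z n : ℕ) : W3 x y z ≠ RF n := by
  intro h
  exact true_not_mem_RF (h ▸ true_mem_W3 x y z)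

lemma count_true_W2 (x y : ℕ) : (W2 x y).count true = 1 := by
  simp [W2, RF, List.count_append, List.count_replicate]

lemma count_true_W3 (x y z : ℕ) : (W3 x y z).count true = 2 := by
  simp [W3, RF, List.count_append, List.count_replicate, List.count_cons]

lemma W2_ne_W3 (a b x y z : ℕ) : W2 a b ≠ W3 x y z := by
  intro h
  have := congrArg (List.count true) h
  rw [count_true_W2, count_true_W3] at this
  omega

lemma W3_cons {x : ℕ} (y z : ℕ) (h : 1 ≤ x) : W3 x y z = [false] ++ W3 (x-1) y z := by
  show W3 x y z = (RF 1 ++ RF (x-1)) ++ true :: (RF y ++ true :: RF z)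
  rw [← RF_add, show 1 + (x-1) = x by omega]
  rfl

lemma W3_snoc (x y : ℕ) {z : ℕ} (h : 1 ≤ z) : W3 x y z = W3 x y (z-1) ++ [false] := by
  show W3 x y z = (RF x ++ true :: (RF y ++ true :: RF (z-1))) ++ [false]
  simp only [W3, List.append_assoc, List.cons_append]
  congr 3
  rw [show (([false]:List Bool) = RF 1) by simp [RF], ← RF_add, show z - 1 + 1 = z by omega]

lemma W3_mid (x z : ℕ) {y a : ℕ} (h : a ≤ y) : W3 x y z = W2 x a ++ W2 (y-a) z := by
  show W3 x y z = (RF x ++ true :: RF a) ++ (RF (y-a) ++ true :: RF z)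
  simp only [W3, List.append_assoc, List.cons_append]
  congr 2
  rw [← List.append_assoc, ← RF_add, show a + (y-a) = y by omega]

/-- classification of decompositions of W3 into Ulam pairs -/
lemma W3_split {x y z : ℕ} {u v : List Bool} (hw : u ++ v = W3 x y z)
    (hu : u ≠ []) (hv : v ≠ []) (pu : IsUlam u) (pv : IsUlam v) :
    (1 ≤ x ∧ u = [false] ∧ v = W3 (x-1) y z) ∨
    (∃ a, a ≤ y ∧ u = W2 x a ∧ v = W2 (y-a) z ∧ x &&& a = 0 ∧ (y-a) &&& z = 0) ∨
    (1 ≤ z ∧ u = W3 x y (z-1) ∧ v = [false]) := by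
  rcases split_RF_true hw with ⟨i, hi, hu', hv'⟩ | ⟨s1, s2, hs, hu', hv'⟩
  · left
    rw [hu'] at pu
    have h1 : i = 1 := (isUlam_RF i).mp pu
    subst h1
    have hx : 1 ≤ x := by
      rcases Nat.eq_zero_or_pos x with h | h
      · subst h; simp at hi
      · exact h
    exact ⟨hx, by simpa [RF] using hu', by rw [hv']; rfl⟩
  · rcases split_RF_true hs with ⟨a, ha, hs1, hs2⟩ | ⟨t1, t2, ht, hs1, hs2⟩
    · -- u = W2 x a, v = W2 (y-a) z
      right; left
      have hu2 : u = W2 x a := by rw [hu', hs1]; rfl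
      have hv2 : v = W2 (y-a) z := by rw [hv', hs2]; rfl
      rw [hu2] at pu
      rw [hv2] at pv
      exact ⟨a, ha, hu2, hv2, (isUlam_W2 _ x a rfl).mp pu, (isUlam_W2 _ (y-a) z rfl).mp pv⟩
    · -- v = RF piece
      right; right
      obtain ⟨ht1, ht2, hlen⟩ := eq_RF_of_append ht
      rw [hv', hs2, ht2] at pv
      have h1 : t2.length = 1 := (isUlam_RF _).mp pv
      have hz : 1 ≤ z := by omega
      refine ⟨hz, ?_, by rw [hv', hs2, ht2, h1]; rfl⟩
      rw [hu', hs1, ht1, show t1.length = z - 1 by omega]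
      rfl

/-- reversal preserves Ulam -/
lemma isUlam_reverse : ∀ n, ∀ w : List Bool, w.length ≤ n → IsUlam w → IsUlam w.reverse := by
  intro n
  induction n using Nat.strong_induction_on with
  | _ n IH =>
    intro w hn hw
    rcases Nat.lt_or_ge w.length 2 with h | h
    · match w, h with
      | [], _ => simpa using hw
      | [b], _ => exact isUlam_len1 (by simp)
    · rw [isUlam_iff_exu h] at hw
      rw [isUlam_iff_exu (by simpa using h)]
      obtain ⟨⟨u,v⟩, ⟨hu, hv, huv, hweq, pu, pv⟩, huniq⟩ := hw
      simp only at hu hv huv hweq pu pv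
      have hlen : u.length + v.length = w.length := by rw [hweq]; simp
      have hu1 : 1 ≤ u.length := List.length_pos_iff.mpr hu
      have hv1 : 1 ≤ v.length := List.length_pos_iff.mpr hv
      refine ⟨(v.reverse, u.reverse), ⟨by simpa using hv, by simpa using hu, ?_, ?_, ?_, ?_⟩, ?_⟩
      · intro hcon
        exact huv (by
          have := congrArg List.reverse hcon
          simpa using this.symm)
      · rw [hweq]; simp
      · exact IH v.length (by omega) v (le_refl _) pv
      · exact IH u.length (by omega) u (le_refl _) pu
      · rintro ⟨s, t⟩ ⟨hs, ht, hst, hwr, ps, pt⟩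
        simp only at hs ht hst hwr ps pt
        have hw2 : w = t.reverse ++ s.reverse := by
          have := congrArg List.reverse hwr
          simpa using this
        have hstlen : s.length + t.length = w.length := by
          have := congrArg List.length hwr
          simp at this
          omega
        have hs1 : 1 ≤ s.length := List.length_pos_iff.mpr hs
        have ht1 : 1 ≤ t.length := List.length_pos_iff.mpr ht
        have hne : t.reverse ≠ s.reverse := by
          intro hcon
          apply hst
          have := congrArg List.reverse hcon
          simp at this
          exact this.symm
        have heq := huniq (t.reverse, s.reverse) ⟨by simpa using ht, by simpa using hs,
          hne, hw2,
          IH t.length (by omega) t (le_refl _) pt,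
          IH s.length (by omega) s (le_refl _) ps⟩
        rw [Prod.ext_iff] at heq ⊢
        simp only at heq ⊢
        have e1 : t.reverse = u := heq.1
        have e2 : s.reverse = v := heq.2
        constructor
        · have := congrArg List.reverse e2
          simpa using this
        · have := congrArg List.reverse e1
          simpa using this

lemma isUlam_reverse_iff (w : List Bool) : IsUlam w.reverse ↔ IsUlam w := by
  constructor
  · intro h
    have := isUlam_reverse _ w.reverse (le_refl _) h
    simpa using this
  · exact fun h => isUlam_reverse _ w (le_refl _) h

lemma W3_reverse (x y z : ℕ) : (W3 x y z).reverse = W3 z y x := by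
  simp [W3, RF, List.reverse_append, List.reverse_replicate]

lemma isUlam_W3_symm (x y z : ℕ) : IsUlam (W3 x y z) ↔ IsUlam (W3 z y x) := by
  rw [← W3_reverse, isUlam_reverse_iff]


def cntF (y x z : ℕ) : Finset ℕ :=
  (Finset.range (y+1)).filter (fun a => x &&& a = 0 ∧ (y-a) &&& z = 0 ∧ ¬(x = y - a ∧ a = z))

def cnt (y x z : ℕ) : ℕ := (cntF y x z).card

lemma mem_cntF {y x z a : ℕ} : a ∈ cntF y x z ↔
    a ≤ y ∧ x &&& a = 0 ∧ (y-a) &&& z = 0 ∧ ¬(x = y - a ∧ a = z) := by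
  simp [cntF, Finset.mem_filter, Finset.mem_range, Nat.lt_succ_iff, and_assoc]

lemma exu_mem_iff_card_one {α : Type*} [DecidableEq α] (s : Finset α) :
    (∃! a, a ∈ s) ↔ s.card = 1 := by
  rw [Finset.card_eq_one]
  constructor
  · rintro ⟨a, ha, hu⟩
    exact ⟨a, Finset.eq_singleton_iff_unique_mem.mpr ⟨ha, hu⟩⟩
  · rintro ⟨a, ha⟩
    rw [Finset.eq_singleton_iff_unique_mem] at ha
    exact ⟨a, ha.1, ha.2⟩

lemma W2_ne_nil (x y : ℕ) : W2 x y ≠ [] := by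
  apply List.ne_nil_of_length_pos
  rw [W2_len]; omega

lemma W3_ne_nil (x y z : ℕ) : W3 x y z ≠ [] := by
  apply List.ne_nil_of_length_pos
  rw [W3_len]; omega

open scoped Classical in
lemma T_rec (y x z : ℕ) :
    IsUlam (W3 x y z) ↔
      cnt y x z + (if 1 ≤ x ∧ IsUlam (W3 (x-1) y z) then 1 else 0)
        + (if 1 ≤ z ∧ IsUlam (W3 x y (z-1)) then 1 else 0) = 1 := by
  have fneW2 : ∀ a b : ℕ, W2 a b ≠ [false] := by
    intro a b h
    exact W2_ne_RF a b 1 (by rw [h]; simp [RF])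
  have fneW3 : ∀ a b c : ℕ, W3 a b c ≠ [false] := by
    intro a b c h
    exact W3_ne_RF a b c 1 (by rw [h]; simp [RF])
  set A : Finset (List Bool × List Bool) :=
    (cntF y x z).image (fun a => (W2 x a, W2 (y-a) z)) with hA
  set B : Finset (List Bool × List Bool) :=
    if 1 ≤ x ∧ IsUlam (W3 (x-1) y z) then {([false], W3 (x-1) y z)} else ∅ with hB
  set C : Finset (List Bool × List Bool) :=
    if 1 ≤ z ∧ IsUlam (W3 x y (z-1)) then {(W3 x y (z-1), ([false]:List Bool))} else ∅ with hC
  have hmem : ∀ p : List Bool × List Bool,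
      (p.1 ≠ [] ∧ p.2 ≠ [] ∧ p.1 ≠ p.2 ∧ W3 x y z = p.1 ++ p.2 ∧ IsUlam p.1 ∧ IsUlam p.2)
      ↔ p ∈ A ∪ B ∪ C := by
    rintro ⟨u, v⟩
    simp only
    constructor
    · rintro ⟨hu, hv, huv, hw, pu, pv⟩
      rcases W3_split hw.symm hu hv pu pv with ⟨hx1, hu', hv'⟩ | ⟨a, ha, hu', hv', g1, g2⟩ |
        ⟨hz1, hu', hv'⟩
      · apply Finset.mem_union_left
        apply Finset.mem_union_right
        rw [hv'] at pv
        rw [hB, if_pos ⟨hx1, pv⟩]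
        simp [hu', hv']
      · apply Finset.mem_union_left
        apply Finset.mem_union_left
        rw [hA, Finset.mem_image]
        refine ⟨a, mem_cntF.mpr ⟨ha, g1, g2, ?_⟩, by rw [hu', hv']⟩
        rintro ⟨e1, e2⟩
        apply huv
        rw [hu', hv', ← e1, ← e2]
      · apply Finset.mem_union_right
        rw [hu'] at pu
        rw [hC, if_pos ⟨hz1, pu⟩]
        simp [hu', hv']
    · intro hp
      rcases Finset.mem_union.mp hp with hp | hp
      · rcases Finset.mem_union.mp hp with hp | hp
        · rw [hA, Finset.mem_image] at hp
          obtain ⟨a, ha, he⟩ := hp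
          obtain ⟨ha1, g1, g2, g3⟩ := mem_cntF.mp ha
          have e1 : u = W2 x a := ((Prod.ext_iff.mp he).1).symm
          have e2 : v = W2 (y-a) z := ((Prod.ext_iff.mp he).2).symm
          subst e1 e2
          refine ⟨W2_ne_nil _ _, W2_ne_nil _ _, ?_, W3_mid x z ha1,
            (isUlam_W2 _ x a rfl).mpr g1, (isUlam_W2 _ (y-a) z rfl).mpr g2⟩
          intro hcon
          exact g3 ⟨(W2_inj hcon).1, (W2_inj hcon).2⟩
        · rw [hB] at hp
          by_cases hc : 1 ≤ x ∧ IsUlam (W3 (x-1) y z)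
          · rw [if_pos hc] at hp
            simp only [Finset.mem_singleton, Prod.ext_iff] at hp
            obtain ⟨e1, e2⟩ := hp
            subst e1 e2
            exact ⟨by simp, W3_ne_nil _ _ _, fun h => fneW3 _ _ _ h.symm,
              W3_cons y z hc.1, isUlam_false, hc.2⟩
          · rw [if_neg hc] at hp
            simp at hp
      · rw [hC] at hp
        by_cases hc : 1 ≤ z ∧ IsUlam (W3 x y (z-1))
        · rw [if_pos hc] at hp
          simp only [Finset.mem_singleton, Prod.ext_iff] at hp
          obtain ⟨e1, e2⟩ := hp
          subst e1 e2
          exact ⟨W3_ne_nil _ _ _, by simp, fneW3 _ _ _, W3_snoc x y hc.1, hc.2, isUlam_false⟩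
        · rw [if_neg hc] at hp
          simp at hp
  have hlen : 2 ≤ (W3 x y z).length := by rw [W3_len]; omega
  rw [isUlam_iff_exu hlen]
  have : (∃! p : List Bool × List Bool,
      p.1 ≠ [] ∧ p.2 ≠ [] ∧ p.1 ≠ p.2 ∧ W3 x y z = p.1 ++ p.2 ∧ IsUlam p.1 ∧ IsUlam p.2)
      ↔ (A ∪ B ∪ C).card = 1 := by
    rw [← exu_mem_iff_card_one]
    exact existsUnique_congr hmem
  rw [this]
  have hdisjAB : Disjoint A B := by
    rw [Finset.disjoint_left]
    intro p hpA hpB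
    rw [hA, Finset.mem_image] at hpA
    obtain ⟨a, -, he⟩ := hpA
    rw [hB] at hpB
    by_cases hc : 1 ≤ x ∧ IsUlam (W3 (x-1) y z)
    · rw [if_pos hc] at hpB
      simp only [Finset.mem_singleton] at hpB
      rw [← he] at hpB
      have := congrArg Prod.fst hpB
      simp only at this
      exact fneW2 x a this
    · rw [if_neg hc] at hpB
      simp at hpB
  have hdisjAC : Disjoint (A ∪ B) C := by
    rw [Finset.disjoint_left]
    intro p hpAB hpC
    rw [hC] at hpC
    by_cases hc : 1 ≤ z ∧ IsUlam (W3 x y (z-1))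
    · rw [if_pos hc] at hpC
      simp only [Finset.mem_singleton] at hpC
      rcases Finset.mem_union.mp hpAB with hp | hp
      · rw [hA, Finset.mem_image] at hp
        obtain ⟨a, -, he⟩ := hp
        rw [← he] at hpC
        have := congrArg Prod.fst hpC
        simp only at this
        exact W2_ne_W3 _ _ _ _ _ this
      · rw [hB] at hp
        by_cases hc2 : 1 ≤ x ∧ IsUlam (W3 (x-1) y z)
        · rw [if_pos hc2] at hp
          simp only [Finset.mem_singleton] at hp
          rw [hp] at hpC
          have := congrArg Prod.fst hpC
          simp only at this
          exact fneW3 _ _ _ this.symm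
        · rw [if_neg hc2] at hp
          simp at hp
    · rw [if_neg hc] at hpC
      simp at hpC
  rw [Finset.card_union_of_disjoint hdisjAC, Finset.card_union_of_disjoint hdisjAB]
  have hcardA : A.card = cnt y x z := by
    rw [hA, cnt]
    apply Finset.card_image_of_injective
    intro a b hab
    have := congrArg Prod.fst hab
    simp only at this
    exact (W2_inj this).2
  have hcardB : B.card = if 1 ≤ x ∧ IsUlam (W3 (x-1) y z) then 1 else 0 := by
    rw [hB]
    by_cases hc : 1 ≤ x ∧ IsUlam (W3 (x-1) y z)
    · rw [if_pos hc, if_pos hc]; simp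
    · rw [if_neg hc, if_neg hc]; simp
  have hcardC : C.card = if 1 ≤ z ∧ IsUlam (W3 x y (z-1)) then 1 else 0 := by
    rw [hC]
    by_cases hc : 1 ≤ z ∧ IsUlam (W3 x y (z-1))
    · rw [if_pos hc, if_pos hc]; simp
    · rw [if_neg hc, if_neg hc]; simp
  rw [hcardA, hcardB, hcardC]


lemma land_eq_zero_iff' {a b : ℕ} :
    a &&& b = 0 ↔ ∀ i, ¬(a.testBit i = true ∧ b.testBit i = true) := by
  constructor
  · rintro h i ⟨ha, hb⟩
    have := congrArg (fun n => n.testBit i) h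
    simp only [Nat.testBit_land, ha, hb, Nat.zero_testBit] at this
    simp at this
  · intro h
    apply Nat.eq_of_testBit_eq
    intro i
    simp only [Nat.testBit_land, Nat.zero_testBit]
    specialize h i
    cases hA : a.testBit i <;> cases hB : b.testBit i <;> simp_all

lemma testBit_add_pow {k x i : ℕ} (h : i < k + 1) :
    (x + 2^(k+1)).testBit i = x.testBit i := by
  have h2 : 2^(k+1) = 2^i * (2 * 2^(k-i)) := by
    rw [show 2 * 2^(k-i) = 2^(k-i+1) by rw [pow_succ]; ring, ← pow_add]
    congr 1
    omega
  rw [Nat.testBit_eq_decide_div_mod_eq, Nat.testBit_eq_decide_div_mod_eq, h2,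
    Nat.add_mul_div_left _ _ (Nat.two_pow_pos i), Nat.add_mul_mod_self_left]

lemma land_add_pow {k x a : ℕ} (ha : a < 2^(k+1)) :
    ((x + 2^(k+1)) &&& a = 0) ↔ (x &&& a = 0) := by
  rw [land_eq_zero_iff', land_eq_zero_iff']
  apply forall_congr'
  intro i
  rcases Nat.lt_or_ge i (k+1) with h | h
  · rw [testBit_add_pow h]
  · have : a.testBit i = false := Nat.testBit_lt_two_pow (lt_of_lt_of_le ha (Nat.pow_le_pow_right (by norm_num) h))
    simp [this]

lemma pow_land_eq_zero_iff {v a : ℕ} : (2^v &&& a = 0) ↔ a.testBit v = false := by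
  rw [land_eq_zero_iff']
  constructor
  · intro h
    by_contra hc
    exact h v ⟨by simp [Nat.testBit_two_pow], by simpa using hc⟩
  · rintro h i ⟨h1, h2⟩
    rw [Nat.testBit_two_pow] at h1
    have : v = i := by simpa using h1
    subst this
    rw [h] at h2
    exact absurd h2 (by simp)

lemma land_forces_zero {k b z : ℕ} (hb : b < 2^(k+1)) (hz : z % 2^(k+1) = 2^(k+1) - 1)
    (h : b &&& z = 0) : b = 0 := by
  apply Nat.eq_of_testBit_eq
  intro i
  simp only [Nat.zero_testBit]
  rcases Nat.lt_or_ge i (k+1) with hi | hi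
  · have hzi : z.testBit i = true := by
      have := Nat.testBit_mod_two_pow z (k+1) i
      rw [hz, Nat.testBit_two_pow_sub_one] at this
      simp [hi] at this
      exact this
    by_contra hc
    exact (land_eq_zero_iff'.mp h) i ⟨by simpa using hc, hzi⟩
  · exact Nat.testBit_lt_two_pow (lt_of_lt_of_le hb (Nat.pow_le_pow_right (by norm_num) hi))

lemma exists_unset_bit {k z : ℕ} (h : z % 2^(k+1) ≠ 2^(k+1) - 1) :
    ∃ v, v ≤ k ∧ z.testBit v = false := by
  by_contra hc
  push_neg at hc
  apply h
  apply Nat.eq_of_testBit_eq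
  intro i
  rw [Nat.testBit_mod_two_pow, Nat.testBit_two_pow_sub_one]
  rcases Nat.lt_or_ge i (k+1) with hi | hi
  · have := hc i (by omega)
    simp only [ne_eq, Bool.not_eq_false] at this
    simp [hi, this]
  · simp [show ¬ (i < k+1) by omega]

lemma count_false_allones : ∀ n : ℕ, ((2^n - 1 : ℕ)).bits.count false = 0 := by
  intro n
  induction n with
  | zero => simp
  | succ n IH =>
    have h : (2^(n+1) - 1 : ℕ) = 2 * (2^n - 1) + 1 := by
      have : (1:ℕ) ≤ 2^n := Nat.one_le_two_pow
      have : (2:ℕ)^(n+1) = 2 * 2^n := by rw [pow_succ]; ring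
      omega
    rw [h, Nat.bit1_bits]
    simpa using IH

/-- existence of a "shifted" solution pair -/
lemma lemG : ∀ m x z : ℕ, x + z = m → x &&& z = 0 → 1 ≤ m →
    ∃ a b, a + b = m - 1 ∧ a &&& x = 0 ∧ b &&& z = 0 := by
  intro m
  induction m using Nat.strong_induction_on with
  | _ m IH =>
    intro x z hsum hland hm
    obtain ⟨x', hx⟩ : ∃ t, x = 2*t ∨ x = 2*t+1 := ⟨x/2, by omega⟩
    obtain ⟨z', hz⟩ : ∃ t, z = 2*t ∨ z = 2*t+1 := ⟨z/2, by omega⟩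
    rcases hx with hx | hx <;> rcases hz with hz | hz <;> subst hx hz
    · -- both even
      have hinner : x' &&& z' = 0 := by
        have := land_two_mul x' z'
        omega
      obtain ⟨a', b', hab, ha, hb⟩ := IH (x' + z') (by omega) x' z' rfl hinner (by omega)
      refine ⟨2*a'+1, 2*b', by omega, ?_, ?_⟩
      · have := land_two_mul_add_one_left a' x'
        omega
      · have := land_two_mul b' z'
        omega
    · -- x even, z odd : a = 2*z', b = x
      have hinner : x' &&& z' = 0 := by
        have := land_two_mul_add_one_right x' z'
        omega
      refine ⟨2*z', 2*x', by omega, ?_, ?_⟩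
      · have h1 := land_two_mul z' x'
        have h2 : z' &&& x' = 0 := by rw [Nat.land_comm]; exact hinner
        omega
      · have := land_two_mul_add_one_right x' z'
        omega
    · -- x odd, z even
      have hinner : x' &&& z' = 0 := by
        have := land_two_mul_add_one_left x' z'
        omega
      refine ⟨2*z', 2*x', by omega, ?_, ?_⟩
      · have h1 := land_two_mul_add_one_right z' x'
        have h2 : z' &&& x' = 0 := by rw [Nat.land_comm]; exact hinner
        omega
      · have := land_two_mul x' z'
        omega
    · -- both odd: impossible
      have := land_two_mul_add_one x' z'
      omega

lemma lemF1 : ∀ m x z : ℕ, x + z = m → x &&& z = 0 → 1 ≤ (Nat.bits m).count false →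
    ∃ a b, a + b = m ∧ a &&& x = 0 ∧ b &&& z = 0 ∧ a ≠ z := by
  intro m
  induction m using Nat.strong_induction_on with
  | _ m IH =>
    intro x z hsum hland hcount
    subst hsum
    obtain ⟨x', hx⟩ : ∃ t, x = 2*t ∨ x = 2*t+1 := ⟨x/2, by omega⟩
    obtain ⟨z', hz⟩ : ∃ t, z = 2*t ∨ z = 2*t+1 := ⟨z/2, by omega⟩
    rcases hx with hx | hx <;> rcases hz with hz | hz <;> subst hx hz
    · -- both even: m = 2m' even
      have hm0 : x' + z' ≠ 0 := by
        rintro h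
        have hx0 : x' = 0 := by omega
        have hz0 : z' = 0 := by omega
        subst hx0 hz0
        simp at hcount
      have hinner : x' &&& z' = 0 := by
        have := land_two_mul x' z'
        omega
      obtain ⟨a', b', hab, ha, hb⟩ := lemG (x'+z') x' z' rfl hinner (by omega)
      refine ⟨2*a'+1, 2*b'+1, by omega, ?_, ?_, by omega⟩
      · have := land_two_mul_add_one_left a' x'
        omega
      · have := land_two_mul_add_one_left b' z'
        omega
    · -- x even, z odd
      have hinner : x' &&& z' = 0 := by
        have := land_two_mul_add_one_right x' z'
        omega
      have hcount' : 1 ≤ (Nat.bits (x'+z')).count false := by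
        have hb := Nat.bit1_bits (x'+z')
        rw [show 2*x' + (2*z'+1) = 2*(x'+z')+1 by omega, hb] at hcount
        simpa using hcount
      obtain ⟨a', b', hab, ha, hb, hne⟩ := IH (x'+z') (by omega) x' z' rfl hinner hcount'
      refine ⟨2*a'+1, 2*b', by omega, ?_, ?_, by omega⟩
      · have := land_two_mul_add_one_left a' x'
        omega
      · have := land_two_mul_add_one_right b' z'
        omega
    · -- x odd, z even
      have hinner : x' &&& z' = 0 := by
        have := land_two_mul_add_one_left x' z'
        omega
      have hcount' : 1 ≤ (Nat.bits (x'+z')).count false := by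
        have hb := Nat.bit1_bits (x'+z')
        rw [show 2*x'+1 + 2*z' = 2*(x'+z')+1 by omega, hb] at hcount
        simpa using hcount
      obtain ⟨a', b', hab, ha, hb, hne⟩ := IH (x'+z') (by omega) x' z' rfl hinner hcount'
      refine ⟨2*a', 2*b'+1, by omega, ?_, ?_, by omega⟩
      · have := land_two_mul_add_one_right a' x'
        omega
      · have := land_two_mul_add_one_left b' z'
        omega
    · -- both odd impossible
      have := land_two_mul_add_one x' z'
      omega

lemma lemF2 : ∀ m x z : ℕ, x + z = m → x &&& z = 0 → 2 ≤ (Nat.bits m).count false →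
    ∃ a1 b1 a2 b2, (a1 + b1 = m ∧ a1 &&& x = 0 ∧ b1 &&& z = 0 ∧ a1 ≠ z) ∧
      (a2 + b2 = m ∧ a2 &&& x = 0 ∧ b2 &&& z = 0 ∧ a2 ≠ z) ∧ a1 ≠ a2 := by
  intro m
  induction m using Nat.strong_induction_on with
  | _ m IH =>
    intro x z hsum hland hcount
    subst hsum
    obtain ⟨x', hx⟩ : ∃ t, x = 2*t ∨ x = 2*t+1 := ⟨x/2, by omega⟩
    obtain ⟨z', hz⟩ : ∃ t, z = 2*t ∨ z = 2*t+1 := ⟨z/2, by omega⟩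
    rcases hx with hx | hx <;> rcases hz with hz | hz <;> subst hx hz
    · -- both even: m = 2*(x'+z')
      have hm0 : x' + z' ≠ 0 := by
        rintro h
        have hx0 : x' = 0 := by omega
        have hz0 : z' = 0 := by omega
        subst hx0 hz0
        simp at hcount
      have hinner : x' &&& z' = 0 := by
        have := land_two_mul x' z'
        omega
      have hcount' : 1 ≤ (Nat.bits (x'+z')).count false := by
        have hb := Nat.bit0_bits (x'+z') hm0
        rw [show 2*x' + 2*z' = 2*(x'+z') by omega, hb, List.count_cons] at hcount
        simp only [beq_self_eq_true, if_true] at hcount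
        omega
      obtain ⟨a', b', hab, ha, hb⟩ := lemG (x'+z') x' z' rfl hinner (by omega)
      obtain ⟨a'', b'', hab2, ha2, hb2, hne2⟩ := lemF1 (x'+z') x' z' rfl hinner hcount'
      refine ⟨2*a'+1, 2*b'+1, 2*a'', 2*b'', ⟨by omega, ?_, ?_, by omega⟩,
        ⟨by omega, ?_, ?_, by omega⟩, by omega⟩
      · have := land_two_mul_add_one_left a' x'
        omega
      · have := land_two_mul_add_one_left b' z'
        omega
      · have := land_two_mul a'' x'
        omega
      · have := land_two_mul b'' z'
        omega
    · -- x even z odd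
      have hinner : x' &&& z' = 0 := by
        have := land_two_mul_add_one_right x' z'
        omega
      have hcount' : 2 ≤ (Nat.bits (x'+z')).count false := by
        have hb := Nat.bit1_bits (x'+z')
        rw [show 2*x' + (2*z'+1) = 2*(x'+z')+1 by omega, hb] at hcount
        simpa using hcount
      obtain ⟨a1, b1, a2, b2, ⟨e1, f1, g1, n1⟩, ⟨e2, f2, g2, n2⟩, hne⟩ :=
        IH (x'+z') (by omega) x' z' rfl hinner hcount'
      refine ⟨2*a1+1, 2*b1, 2*a2+1, 2*b2, ⟨by omega, ?_, ?_, by omega⟩,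
        ⟨by omega, ?_, ?_, by omega⟩, by omega⟩
      · have := land_two_mul_add_one_left a1 x'
        omega
      · have := land_two_mul_add_one_right b1 z'
        omega
      · have := land_two_mul_add_one_left a2 x'
        omega
      · have := land_two_mul_add_one_right b2 z'
        omega
    · -- x odd z even
      have hinner : x' &&& z' = 0 := by
        have := land_two_mul_add_one_left x' z'
        omega
      have hcount' : 2 ≤ (Nat.bits (x'+z')).count false := by
        have hb := Nat.bit1_bits (x'+z')
        rw [show 2*x'+1 + 2*z' = 2*(x'+z')+1 by omega, hb] at hcount
        simpa using hcount
      obtain ⟨a1, b1, a2, b2, ⟨e1, f1, g1, n1⟩, ⟨e2, f2, g2, n2⟩, hne⟩ :=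
        IH (x'+z') (by omega) x' z' rfl hinner hcount'
      refine ⟨2*a1, 2*b1+1, 2*a2, 2*b2+1, ⟨by omega, ?_, ?_, by omega⟩,
        ⟨by omega, ?_, ?_, by omega⟩, by omega⟩
      · have := land_two_mul_add_one_right a1 x'
        omega
      · have := land_two_mul_add_one_left b1 z'
        omega
      · have := land_two_mul_add_one_right a2 x'
        omega
      · have := land_two_mul_add_one_left b2 z'
        omega
    · have := land_two_mul_add_one x' z'
      omega


lemma land_pow_high {k a : ℕ} (ha : a < 2^(k+1)) : 2^(k+1) &&& a = 0 := by
  rw [land_eq_zero_iff']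
  rintro i ⟨hp, hai⟩
  rw [Nat.testBit_two_pow] at hp
  have : k+1 = i := by simpa using hp
  subst this
  rw [Nat.testBit_lt_two_pow ha] at hai
  exact absurd hai (by simp)

lemma land_ones_low {k a : ℕ} (ha : a < 2^(k+1)) : (2^(k+1) - 1) &&& a = a := by
  rw [Nat.land_comm]
  exact Nat.and_two_pow_sub_one_of_lt_two_pow ha

section Main

variable {k y : ℕ}

lemma y_ne_ones (hc : 2 ≤ (Nat.bits y).count false) : y ≠ 2^(k+1) - 1 := by
  intro h
  rw [h] at hc
  rw [count_false_allones] at hc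
  omega

lemma cnt_diag_ge_two (hc : 2 ≤ (Nat.bits y).count false) {x z : ℕ}
    (hxz : x + z = y) (hl : x &&& z = 0) : 2 ≤ cnt y x z := by
  obtain ⟨a1, b1, a2, b2, ⟨e1, f1, g1, n1⟩, ⟨e2, f2, g2, n2⟩, hne⟩ := lemF2 y x z hxz hl hc
  have m1 : a1 ∈ cntF y x z := by
    refine mem_cntF.mpr ⟨by omega, by rw [Nat.land_comm]; exact f1, ?_, ?_⟩
    · rw [show y - a1 = b1 by omega]; exact g1
    · rintro ⟨-, h⟩; exact n1 h
  have m2 : a2 ∈ cntF y x z := by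
    refine mem_cntF.mpr ⟨by omega, by rw [Nat.land_comm]; exact f2, ?_, ?_⟩
    · rw [show y - a2 = b2 by omega]; exact g2
    · rintro ⟨-, h⟩; exact n2 h
  exact Finset.one_lt_card.mpr ⟨a1, m1, a2, m2, hne⟩

lemma cnt_L3a (h2 : y < 2^(k+1)) (hc : 2 ≤ (Nat.bits y).count false)
    {z : ℕ} (hz : z % 2^(k+1) = 2^(k+1) - 1) : cnt y 0 z = 1 := by
  have : cntF y 0 z = {y} := by
    apply Finset.ext
    intro a
    rw [mem_cntF, Finset.mem_singleton]
    constructor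
    · rintro ⟨ha, -, g2, -⟩
      have := land_forces_zero (b := y - a) (by omega) hz g2
      omega
    · rintro rfl
      refine ⟨le_refl _, by simp, by simp [Nat.sub_self], ?_⟩
      rintro ⟨-, hyz⟩
      subst hyz
      rw [Nat.mod_eq_of_lt h2] at hz
      exact y_ne_ones hc hz
  rw [cnt, this, Finset.card_singleton]

lemma cnt_L3b (h1 : 2^k ≤ y) (h2 : y < 2^(k+1)) (hc : 2 ≤ (Nat.bits y).count false)
    {z : ℕ} (hz : z % 2^(k+1) ≠ 2^(k+1) - 1) : 2 ≤ cnt y 0 z := by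
  by_cases hzy : z = y
  · subst hzy
    exact cnt_diag_ge_two hc (by omega) (by simp)
  · obtain ⟨v, hv, hbit⟩ := exists_unset_bit hz
    have hpv : 2^v ≤ y := le_trans (Nat.pow_le_pow_right (by norm_num) hv) h1
    have hp1 : 1 ≤ 2^v := Nat.one_le_two_pow
    have m1 : y ∈ cntF y 0 z := by
      refine mem_cntF.mpr ⟨le_refl _, by simp, by simp [Nat.sub_self], ?_⟩
      rintro ⟨-, hyz⟩
      exact hzy hyz.symm
    have m2 : y - 2^v ∈ cntF y 0 z := by
      refine mem_cntF.mpr ⟨by omega, by simp, ?_, ?_⟩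
      · rw [show y - (y - 2^v) = 2^v by omega]
        exact pow_land_eq_zero_iff.mpr hbit
      · rintro ⟨h0, -⟩
        rw [show y - (y - 2^v) = 2^v by omega] at h0
        omega
    exact Finset.one_lt_card.mpr ⟨y, m1, y - 2^v, m2, by omega⟩

lemma cnt_L4a (h2 : y < 2^(k+1)) (hc : 2 ≤ (Nat.bits y).count false)
    {z : ℕ} (hz : z % 2^(k+1) = 2^(k+1) - 1) : cnt y (2^(k+1)) z = 1 := by
  have hpos : (1:ℕ) ≤ 2^(k+1) := Nat.one_le_two_pow
  have : cntF y (2^(k+1)) z = {y} := by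
    apply Finset.ext
    intro a
    rw [mem_cntF, Finset.mem_singleton]
    constructor
    · rintro ⟨ha, -, g2, -⟩
      have := land_forces_zero (b := y - a) (by omega) hz g2
      omega
    · rintro rfl
      refine ⟨le_refl _, land_pow_high h2, by simp [Nat.sub_self], ?_⟩
      rintro ⟨h0, -⟩
      omega
  rw [cnt, this, Finset.card_singleton]

lemma cnt_L4b (h1 : 2^k ≤ y) (h2 : y < 2^(k+1))
    {z : ℕ} (hz : z % 2^(k+1) ≠ 2^(k+1) - 1) : 2 ≤ cnt y (2^(k+1)) z := by
  obtain ⟨v, hv, hbit⟩ := exists_unset_bit hz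
  have hpv : 2^v ≤ y := le_trans (Nat.pow_le_pow_right (by norm_num) hv) h1
  have hp1 : 1 ≤ 2^v := Nat.one_le_two_pow
  have m1 : y ∈ cntF y (2^(k+1)) z := by
    refine mem_cntF.mpr ⟨le_refl _, land_pow_high h2, by simp [Nat.sub_self], ?_⟩
    rintro ⟨h0, -⟩
    omega
  have m2 : y - 2^v ∈ cntF y (2^(k+1)) z := by
    refine mem_cntF.mpr ⟨by omega, land_pow_high (by omega), ?_, ?_⟩
    · rw [show y - (y - 2^v) = 2^v by omega]
      exact pow_land_eq_zero_iff.mpr hbit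
    · rintro ⟨h0, -⟩
      have : y - (y - 2^v) ≤ y := by omega
      omega
  exact Finset.one_lt_card.mpr ⟨y, m1, y - 2^v, m2, by omega⟩

lemma cnt_L5 (h1 : 2^k ≤ y) (h2 : y < 2^(k+1))
    {z : ℕ} (hz : z % 2^(k+1) = 2^(k+1) - 1) : cnt y (2^(k+1) - 1) z = 0 := by
  rw [cnt, Finset.card_eq_zero]
  apply Finset.eq_empty_of_forall_notMem
  intro a ha
  obtain ⟨ha1, g1, g2, -⟩ := mem_cntF.mp ha
  rw [land_ones_low (by omega)] at g1
  subst g1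
  rw [Nat.sub_zero] at g2
  have hy0 : y ≠ 0 := by
    have : (1:ℕ) ≤ 2^k := Nat.one_le_two_pow
    omega
  obtain ⟨i, hi, -⟩ := Nat.exists_most_significant_bit hy0
  have hik : i < k + 1 := by
    by_contra hik
    have := Nat.testBit_lt_two_pow (x := y) (i := i)
      (lt_of_lt_of_le h2 (Nat.pow_le_pow_right (by norm_num) (by omega)))
    rw [this] at hi
    exact absurd hi (by simp)
  have hzi : z.testBit i = true := by
    have := Nat.testBit_mod_two_pow z (k+1) i
    rw [hz, Nat.testBit_two_pow_sub_one] at this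
    simp [hik] at this
    exact this
  exact (land_eq_zero_iff'.mp g2) i ⟨hi, hzi⟩

lemma cnt_shift (h2 : y < 2^(k+1)) (hc : 2 ≤ (Nat.bits y).count false) (x z E : ℕ) :
    (cnt y (x + 2^(k+1)) z + E = 1) ↔ (cnt y x z + E = 1) := by
  have hsub : cntF y x z ⊆ cntF y (x + 2^(k+1)) z := by
    intro a ha
    obtain ⟨ha1, g1, g2, -⟩ := mem_cntF.mp ha
    refine mem_cntF.mpr ⟨ha1, (land_add_pow (by omega)).mpr g1, g2, ?_⟩
    rintro ⟨hq, -⟩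
    have : y - a ≤ y := Nat.sub_le _ _
    omega
  by_cases hQ : z ≤ y ∧ x + z = y ∧ x &&& z = 0
  · have c1 : 2 ≤ cnt y x z := cnt_diag_ge_two hc hQ.2.1 hQ.2.2
    have c2 : 2 ≤ cnt y (x + 2^(k+1)) z := le_trans c1 (Finset.card_le_card hsub)
    omega
  · have heq : cntF y (x + 2^(k+1)) z = cntF y x z := by
      apply Finset.Subset.antisymm _ hsub
      intro a ha
      obtain ⟨ha1, g1, g2, -⟩ := mem_cntF.mp ha
      refine mem_cntF.mpr ⟨ha1, (land_add_pow (by omega)).mp g1, g2, ?_⟩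
      rintro ⟨e1, e2⟩
      subst e2
      exact hQ ⟨ha1, by omega, (land_add_pow (by omega)).mp g1⟩
    rw [cnt, cnt, heq]

end Main


open scoped Classical in
lemma main_induction {k y : ℕ} (h1 : 2 ^ k ≤ y) (h2 : y < 2 ^ (k + 1))
    (hc : 2 ≤ (Nat.bits y).count false) :
    ∀ n : ℕ,
      (∀ x z : ℕ, x + z + 2^(k+1) = n →
        ((IsUlam (W3 (x + 2^(k+1)) y z) ↔ IsUlam (W3 x y z)) ∧
         (IsUlam (W3 x y (z + 2^(k+1))) ↔ IsUlam (W3 x y z)))) ∧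
      (∀ z : ℕ, z + (2^(k+1) - 1) = n → z % 2^(k+1) = 2^(k+1) - 1 →
        (¬ IsUlam (W3 (2^(k+1) - 1) y z) ∧
         (IsUlam (W3 (2^(k+1) - 2) y z) ↔ IsUlam (W3 (2^(k+1) - 1) y (z - 1))))) := by
  have hP2 : 2 ≤ 2^(k+1) := by
    calc (2:ℕ) = 2^1 := by norm_num
    _ ≤ 2^(k+1) := Nat.pow_le_pow_right (by norm_num) (by omega)
  intro n
  induction n using Nat.strong_induction_on with
  | _ n IH =>
    have A1 : ∀ x z : ℕ, x + z + 2^(k+1) = n →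
        (IsUlam (W3 (x + 2^(k+1)) y z) ↔ IsUlam (W3 x y z)) := by
      intro x z hn
      rcases Nat.eq_zero_or_pos x with rfl | hx
      · -- x = 0 boundary case
        rw [Nat.zero_add] at hn ⊢
        rw [T_rec y (2^(k+1)) z, T_rec y 0 z]
        by_cases hzm : z % 2^(k+1) = 2^(k+1) - 1
        · rw [cnt_L4a h2 hc hzm, cnt_L3a h2 hc hzm]
          have hz1 : 1 ≤ z := by
            have := Nat.mod_le z (2^(k+1))
            omega
          have hCz : ¬ IsUlam (W3 (2^(k+1)-1) y z) :=
            ((IH (n-1) (by omega)).2 z (by omega) hzm).1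
          have hrec : IsUlam (W3 (2^(k+1)) y (z-1)) ↔ IsUlam (W3 0 y (z-1)) := by
            have := ((IH (n-1) (by omega)).1 0 (z-1) (by omega)).1
            rw [Nat.zero_add] at this
            exact this
          rw [if_neg (fun h => hCz h.2), if_neg (by rintro ⟨h, -⟩; omega :
            ¬((1:ℕ) ≤ 0 ∧ IsUlam (W3 (0-1) y z)))]
          have hcongr : ((1 ≤ z ∧ IsUlam (W3 (2^(k+1)) y (z-1)))) ↔
              ((1 ≤ z ∧ IsUlam (W3 0 y (z-1)))) :=
            and_congr_right fun _ => hrec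
          rw [if_congr hcongr rfl rfl]
        · have c1 := cnt_L4b h1 h2 hzm
          have c2 := cnt_L3b h1 h2 hc hzm
          constructor
          · intro hcon
            omega
          · intro hcon
            omega
      · -- x ≥ 1
        rw [T_rec y (x + 2^(k+1)) z, T_rec y x z]
        have e1 : IsUlam (W3 (x + 2^(k+1) - 1) y z) ↔ IsUlam (W3 (x-1) y z) := by
          have := ((IH (n-1) (by omega)).1 (x-1) z (by omega)).1
          rw [show x - 1 + 2^(k+1) = x + 2^(k+1) - 1 by omega] at this
          exact this
        have i1 : (if 1 ≤ x + 2^(k+1) ∧ IsUlam (W3 (x + 2^(k+1) - 1) y z) then 1 else 0)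
            = (if 1 ≤ x ∧ IsUlam (W3 (x-1) y z) then 1 else 0) := by
          apply if_congr _ rfl rfl
          constructor
          · rintro ⟨-, h⟩; exact ⟨hx, e1.mp h⟩
          · rintro ⟨-, h⟩; exact ⟨by omega, e1.mpr h⟩
        have i2 : (if 1 ≤ z ∧ IsUlam (W3 (x + 2^(k+1)) y (z-1)) then 1 else 0)
            = (if 1 ≤ z ∧ IsUlam (W3 x y (z-1)) then 1 else 0) := by
          by_cases hz1 : 1 ≤ z
          · have e2 : IsUlam (W3 (x + 2^(k+1)) y (z-1)) ↔ IsUlam (W3 x y (z-1)) :=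
              ((IH (n-1) (by omega)).1 x (z-1) (by omega)).1
            apply if_congr (and_congr_right fun _ => e2) rfl rfl
          · rw [if_neg (fun h => hz1 h.1), if_neg (fun h => hz1 h.1)]
        rw [i1, i2, add_assoc, add_assoc, cnt_shift h2 hc x z _]
    constructor
    · intro x z hn
      refine ⟨A1 x z hn, ?_⟩
      rw [isUlam_W3_symm x y (z + 2^(k+1)), isUlam_W3_symm x y z]
      exact A1 z x (by omega)
    · intro z hn hz
      have hzP : 2^(k+1) - 1 ≤ z := by
        have := Nat.mod_le z (2^(k+1))
        omega
      have hD : IsUlam (W3 (2^(k+1)-2) y z) ↔ IsUlam (W3 (2^(k+1)-1) y (z-1)) := by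
        rcases eq_or_ne z (2^(k+1) - 1) with he | hne
        · subst he
          rw [show 2^(k+1) - 1 - 1 = 2^(k+1) - 2 by omega]
          exact isUlam_W3_symm (2^(k+1)-2) y (2^(k+1)-1)
        · have hz2 : 2^(k+1) + (2^(k+1) - 1) ≤ z := by
            rcases Nat.lt_or_ge z (2^(k+1)) with h | h
            · rw [Nat.mod_eq_of_lt h] at hz
              exact absurd hz hne
            · have hmod : (z - 2^(k+1)) % 2^(k+1) = 2^(k+1) - 1 := by
                rw [← Nat.mod_eq_sub_mod h]
                exact hz
              have := Nat.mod_le (z - 2^(k+1)) (2^(k+1))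
              omega
          have e1 : IsUlam (W3 (2^(k+1)-2) y z) ↔ IsUlam (W3 (2^(k+1)-2) y (z - 2^(k+1))) := by
            have := ((IH (n-1) (by omega)).1 (2^(k+1)-2) (z - 2^(k+1)) (by omega)).2
            rw [show z - 2^(k+1) + 2^(k+1) = z by omega] at this
            exact this
          have e2 : IsUlam (W3 (2^(k+1)-1) y (z-1)) ↔
              IsUlam (W3 (2^(k+1)-1) y (z - 2^(k+1) - 1)) := by
            have := ((IH (n-1) (by omega)).1 (2^(k+1)-1) (z - 2^(k+1) - 1) (by omega)).2
            rw [show z - 2^(k+1) - 1 + 2^(k+1) = z - 1 by omega] at this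
            exact this
          have e3 := (IH (n - 2^(k+1)) (by omega)).2 (z - 2^(k+1)) (by omega)
            (by rw [← Nat.mod_eq_sub_mod (by omega)]; exact hz)
          rw [e1, e2]
          exact e3.2
      refine ⟨?_, hD⟩
      rw [T_rec y (2^(k+1)-1) z, cnt_L5 h1 h2 hz]
      rw [show 2^(k+1) - 1 - 1 = 2^(k+1) - 2 by omega]
      have hz1 : 1 ≤ z := by omega
      by_cases hT : IsUlam (W3 (2^(k+1)-2) y z)
      · rw [if_pos ⟨by omega, hT⟩, if_pos ⟨hz1, hD.mp hT⟩]
        omega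
      · rw [if_neg (fun h => hT h.2), if_neg (fun h => hT (hD.mpr h.2))]
        omega

theorem ulamSet_biperiodic' (k y : ℕ) (h1 : 2 ^ k ≤ y) (h2 : y < 2 ^ (k + 1))
    (hzum : ¬ (0 < y ∧ (Nat.bits y).count false ≤ 1)) (x z : ℕ) :
    ((IsUlam (W3 (x + 2^(k+1)) y z) ↔ IsUlam (W3 x y z)) ∧
     (IsUlam (W3 x y (z + 2^(k+1))) ↔ IsUlam (W3 x y z))) := by
  have hy0 : 0 < y := by
    have : (1:ℕ) ≤ 2^k := Nat.one_le_two_pow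
    omega
  have hc : 2 ≤ (Nat.bits y).count false := by
    by_contra hcon
    push_neg at hcon
    exact hzum ⟨hy0, by omega⟩
  exact (main_induction h1 h2 hc (x + z + 2^(k+1))).1 x z rfl


/-- For non-Zumkeller `y` with `2^k ≤ y < 2^(k+1)`, `Ulam[y]` is
biperiodic with biperiod `2^(k+1) × 2^(k+1)`. -/
theorem ulamSet_biperiodic (k y : ℕ) (h1 : 2 ^ k ≤ y) (h2 : y < 2 ^ (k + 1))
    (hzum : ¬ IsZumkeller y) (x z : ℕ) :
    ((x + 2 ^ (k + 1), z) ∈ UlamSet y ↔ (x, z) ∈ UlamSet y) ∧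
    ((x, z + 2 ^ (k + 1)) ∈ UlamSet y ↔ (x, z) ∈ UlamSet y) := by
  have hW : ∀ a c : ℕ, wordThree a y c = W3 a y c := by
    intro a c
    simp [wordThree, W3, RF]
  have hz' : ¬ (0 < y ∧ (Nat.bits y).count false ≤ 1) := by
    simpa [IsZumkeller] using hzum
  have h := ulamSet_biperiodic' k y h1 h2 hz' x z
  constructor
  · show IsUlam (wordThree (x + 2^(k+1)) y z) ↔ IsUlam (wordThree x y z)
    rw [hW, hW]
    exact h.1
  · show IsUlam (wordThree x y (z + 2^(k+1))) ↔ IsUlam (wordThree x y z)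
    rw [hW, hW]
    exact h.2
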